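/- arXiv:1706.05263 — 2 statements merged into one kernel-verified Lean document; each statement's English description precedes it below -/
import Mathlib

section
/- In the Gabriel graph of a finite planar point set, any two edges, viewed as closed segments, intersect only at shared endpoints (the Gabriel graph is plane), provided the points are in general position. -/
open EuclideanGeometry Real

noncomputable instance : Fact (Module.finrank ℝ (EuclideanSpace ℝ (Fin 2)) = 2) :=
  ⟨finrank_euclideanSpace_fin⟩

noncomputable instance : Module.Oriented ℝ (EuclideanSpace ℝ (Fin 2)) (Fin 2) :=
  ⟨Module.Basis.orientation (EuclideanSpace.basisFun (Fin 2) ℝ).toBasis⟩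

private lemma toReal_bounds_of_sign_one {θ : Real.Angle} (h : θ.sign = 1) :
    0 < θ.toReal ∧ θ.toReal < π := by
  have h0 : 0 ≤ θ.toReal := Real.Angle.toReal_nonneg_iff_sign_nonneg.mpr (by rw [h]; decide)
  have hne : θ.toReal ≠ 0 := by
    intro hz
    rw [Real.Angle.toReal_eq_zero_iff] at hz
    rw [hz, Real.Angle.sign_zero] at h
    exact absurd h (by decide)
  have hlt : θ.toReal ≠ π := by
    intro hz
    rw [Real.Angle.toReal_eq_pi_iff] at hz
    rw [hz, Real.Angle.sign_coe_pi] at h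
    exact absurd h (by decide)
  exact ⟨lt_of_le_of_ne h0 (Ne.symm hne), lt_of_le_of_ne (Real.Angle.toReal_le_pi θ) hlt⟩

private lemma toReal_bounds_of_sign_neg_one {θ : Real.Angle} (h : θ.sign = -1) :
    -π < θ.toReal ∧ θ.toReal < 0 :=
  ⟨Real.Angle.neg_pi_lt_toReal θ, Real.Angle.toReal_neg_iff_sign_neg.mpr h⟩

/-- Angle addition at a vertex: if `p` is strictly between `a` and `b` and `c` is not on the
line `a b`, then `∠ a c p + ∠ p c b = ∠ a c b`. -/
private lemma angle_split {a p b c : EuclideanSpace ℝ (Fin 2)} (h : Sbtw ℝ a p b)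
    (hncol : ¬ Collinear ℝ ({a, c, b} : Set (EuclideanSpace ℝ (Fin 2)))) :
    ∠ a c p + ∠ p c b = ∠ a c b := by
  have hac : a ≠ c := by
    rintro rfl
    exact hncol ((collinear_pair ℝ a b).subset (by intro z hz; simp at hz ⊢; tauto))
  have hbc : b ≠ c := by
    rintro rfl
    exact hncol ((collinear_pair ℝ a b).subset (by intro z hz; simp at hz ⊢; tauto))
  have hpc : p ≠ c := by
    rintro rfl
    exact hncol h.wbtw.collinear
  have hadd : ∡ a c p + ∡ p c b = ∡ a c b := EuclideanGeometry.oangle_add hac hpc hbc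
  have hs1 : (∡ a c p).sign = (∡ p c b).sign := h.oangle_sign_eq c
  have hs2 : (∡ a c p).sign = (∡ a c b).sign := h.oangle_sign_eq_left c
  have hs3 : (∡ p c b).sign = (∡ a c b).sign := h.oangle_sign_eq_right c
  have hns : (∡ a c b).sign ≠ 0 := fun h0 =>
    hncol (EuclideanGeometry.oangle_sign_eq_zero_iff_collinear.mp h0)
  set t1 := (∡ a c p).toReal with ht1
  set t2 := (∡ p c b).toReal with ht2
  set t := (∡ a c b).toReal with ht
  have hco : (∡ a c b) = ((t1 + t2 : ℝ) : Real.Angle) := by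
    rw [← hadd, ← Real.Angle.coe_toReal (∡ a c p), ← Real.Angle.coe_toReal (∡ p c b),
      ← Real.Angle.coe_add]
  have htval : t = (((t1 + t2 : ℝ)) : Real.Angle).toReal := by rw [ht, hco]
  have hang1 : ∠ a c p = |t1| := EuclideanGeometry.angle_eq_abs_oangle_toReal hac hpc
  have hang2 : ∠ p c b = |t2| := EuclideanGeometry.angle_eq_abs_oangle_toReal hpc hbc
  have hang3 : ∠ a c b = |t| := EuclideanGeometry.angle_eq_abs_oangle_toReal hac hbc
  rw [hang1, hang2, hang3]
  have hpi := Real.pi_pos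
  cases hs : (∡ a c b).sign with
  | zero => exact absurd hs hns
  | neg =>
    have hsgn : (∡ a c b).sign = -1 := by rw [hs]; rfl
    obtain ⟨hb1, hb1'⟩ := toReal_bounds_of_sign_neg_one (hs2.symm ▸ hsgn : (∡ a c p).sign = -1)
    obtain ⟨hb2, hb2'⟩ := toReal_bounds_of_sign_neg_one (hs3.symm ▸ hsgn : (∡ p c b).sign = -1)
    obtain ⟨hb3, hb3'⟩ := toReal_bounds_of_sign_neg_one hsgn
    rcases lt_or_ge (-π) (t1 + t2) with hgt | hle
    · have hval : (((t1 + t2 : ℝ)) : Real.Angle).toReal = t1 + t2 :=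
        Real.Angle.toReal_coe_eq_self_iff.mpr ⟨hgt, by linarith⟩
      rw [abs_of_neg hb1', abs_of_neg hb2', abs_of_neg hb3']
      rw [hval] at htval
      linarith
    · exfalso
      have hval : (((t1 + t2 : ℝ)) : Real.Angle).toReal = t1 + t2 + 2 * π :=
        Real.Angle.toReal_coe_eq_self_add_two_pi_iff.mpr ⟨by linarith, by linarith⟩
      rw [hval] at htval
      -- t = t1 + t2 + 2π; t1+t2 ≤ -π, t1+t2 > -2π so t ∈ (0, π], but t < 0
      linarith
  | pos =>
    have hsgn : (∡ a c b).sign = 1 := by rw [hs]; rfl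
    obtain ⟨hb1, hb1'⟩ := toReal_bounds_of_sign_one (hs2.symm ▸ hsgn : (∡ a c p).sign = 1)
    obtain ⟨hb2, hb2'⟩ := toReal_bounds_of_sign_one (hs3.symm ▸ hsgn : (∡ p c b).sign = 1)
    obtain ⟨hb3, hb3'⟩ := toReal_bounds_of_sign_one hsgn
    rcases le_or_gt (t1 + t2) π with hle | hgt
    · have hval : (((t1 + t2 : ℝ)) : Real.Angle).toReal = t1 + t2 :=
        Real.Angle.toReal_coe_eq_self_iff.mpr ⟨by linarith, hle⟩
      rw [abs_of_pos hb1, abs_of_pos hb2, abs_of_pos hb3]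
      rw [hval] at htval
      linarith
    · exfalso
      have hval : (((t1 + t2 : ℝ)) : Real.Angle).toReal = t1 + t2 - 2 * π :=
        Real.Angle.toReal_coe_eq_self_sub_two_pi_iff.mpr ⟨hgt, by linarith⟩
      rw [hval] at htval
      linarith

private lemma angle_eq_vec (a b c : EuclideanSpace ℝ (Fin 2)) :
    ∠ a b c = InnerProductGeometry.angle (a - b) (c - b) := by
  unfold EuclideanGeometry.angle
  rw [vsub_eq_sub, vsub_eq_sub]

private lemma key_ident (a b w : EuclideanSpace ℝ (Fin 2)) :
    dist w (midpoint ℝ a b) ^ 2 = (dist a b / 2) ^ 2 + (inner ℝ (a - w) (b - w) : ℝ) := by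
  have hm : midpoint ℝ a b = (2:ℝ)⁻¹ • (a + b) := by
    rw [midpoint_eq_smul_add, invOf_eq_inv]
  rw [dist_eq_norm, dist_eq_norm, div_pow, ← real_inner_self_eq_norm_sq,
    ← real_inner_self_eq_norm_sq, hm]
  simp only [inner_sub_left, inner_sub_right, inner_add_left, inner_add_right,
    real_inner_smul_left, real_inner_smul_right]
  rw [real_inner_comm b a, real_inner_comm w a, real_inner_comm b w]
  ring

private lemma angle_le_of_inner_nonneg {a b : EuclideanSpace ℝ (Fin 2)}
    (h : 0 ≤ (inner ℝ a b : ℝ)) : InnerProductGeometry.angle a b ≤ π / 2 := by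
  rcases eq_or_ne a 0 with rfl | ha
  · rw [InnerProductGeometry.angle_zero_left]
  · rcases eq_or_ne b 0 with rfl | hb
    · rw [InnerProductGeometry.angle_zero_right]
    · by_contra hlt
      push_neg at hlt
      have hmem1 : π / 2 ∈ Set.Icc 0 π := by constructor <;> nlinarith [Real.pi_pos]
      have hmem2 : InnerProductGeometry.angle a b ∈ Set.Icc 0 π :=
        ⟨InnerProductGeometry.angle_nonneg a b, InnerProductGeometry.angle_le_pi a b⟩
      have hc : Real.cos (InnerProductGeometry.angle a b) < Real.cos (π / 2) :=
        Real.strictAntiOn_cos hmem1 hmem2 hlt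
      rw [Real.cos_pi_div_two] at hc
      have hm := InnerProductGeometry.cos_angle_mul_norm_mul_norm a b
      have hna : 0 < ‖a‖ := norm_pos_iff.mpr ha
      have hnb : 0 < ‖b‖ := norm_pos_iff.mpr hb
      have := mul_neg_of_neg_of_pos hc (mul_pos hna hnb)
      linarith

/-- The Gabriel graph of a finite planar point set in general position (no three
points collinear, no four points concyclic) is plane: two Gabriel edges with no
shared endpoint, viewed as closed segments, do not intersect.  Here `u v` is a
Gabriel edge iff the open disk with diameter segment `uv` contains no other
point of `P`. -/
theorem stmt_12 (P : Finset (EuclideanSpace ℝ (Fin 2)))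
    (hcol : ∀ a ∈ P, ∀ b ∈ P, ∀ c ∈ P, a ≠ b → a ≠ c → b ≠ c →
      ¬ Collinear ℝ ({a, b, c} : Set (EuclideanSpace ℝ (Fin 2))))
    (hcirc : ∀ a ∈ P, ∀ b ∈ P, ∀ c ∈ P, ∀ d ∈ P,
      a ≠ b → a ≠ c → a ≠ d → b ≠ c → b ≠ d → c ≠ d →
      ¬ Concyclic ({a, b, c, d} : Set (EuclideanSpace ℝ (Fin 2))))
    (u v x y : EuclideanSpace ℝ (Fin 2))
    (hu : u ∈ P) (hv : v ∈ P) (hx : x ∈ P) (hy : y ∈ P)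
    (huv : u ≠ v) (hxy : x ≠ y)
    (hdisjoint : ({u, v} : Set (EuclideanSpace ℝ (Fin 2))) ∩ {x, y} = ∅)
    (hGuv : ∀ w ∈ P, w ≠ u → w ≠ v → ¬ dist w (midpoint ℝ u v) < dist u v / 2)
    (hGxy : ∀ w ∈ P, w ≠ x → w ≠ y → ¬ dist w (midpoint ℝ x y) < dist x y / 2) :
    segment ℝ u v ∩ segment ℝ x y = ∅ := by
  -- pairwise distinctness from hdisjoint
  have hmem : ∀ z, z ∈ ({u, v} : Set (EuclideanSpace ℝ (Fin 2))) →
      z ∈ ({x, y} : Set (EuclideanSpace ℝ (Fin 2))) → False := fun z hz hz' =>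
    Set.eq_empty_iff_forall_notMem.mp hdisjoint z ⟨hz, hz'⟩
  have hux : u ≠ x := fun h => hmem u (by simp) (by simp [h])
  have huy : u ≠ y := fun h => hmem u (by simp) (by simp [h])
  have hvx : v ≠ x := fun h => hmem v (by simp) (by simp [h])
  have hvy : v ≠ y := fun h => hmem v (by simp) (by simp [h])
  apply Set.eq_empty_iff_forall_notMem.mpr
  rintro p ⟨hpuv, hpxy⟩
  have hw1 : Wbtw ℝ u p v := mem_segment_iff_wbtw.mp hpuv
  have hw2 : Wbtw ℝ x p y := mem_segment_iff_wbtw.mp hpxy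
  -- p is none of the four points
  have hpu : p ≠ u := by
    rintro rfl
    exact hcol x hx p hu y hy hux.symm hxy huy hw2.collinear
  have hpv : p ≠ v := by
    rintro rfl
    exact hcol x hx p hv y hy hvx.symm hxy hvy hw2.collinear
  have hpx : p ≠ x := by
    rintro rfl
    exact hcol u hu p hx v hv hux huv (Ne.symm hvx) hw1.collinear
  have hpy : p ≠ y := by
    rintro rfl
    exact hcol u hu p hy v hv huy huv (Ne.symm hvy) hw1.collinear
  have hsb1 : Sbtw ℝ u p v := ⟨hw1, hpu, hpv⟩
  have hsb2 : Sbtw ℝ x p y := ⟨hw2, hpx, hpy⟩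
  -- the four vertex-angle splits
  have s_u : ∠ x u p + ∠ p u y = ∠ x u y :=
    angle_split hsb2 (hcol x hx u hu y hy hux.symm hxy huy)
  have s_x : ∠ u x p + ∠ p x v = ∠ u x v :=
    angle_split hsb1 (hcol u hu x hx v hv hux huv (Ne.symm hvx))
  have s_v : ∠ x v p + ∠ p v y = ∠ x v y :=
    angle_split hsb2 (hcol x hx v hv y hy hvx.symm hxy hvy)
  have s_y : ∠ v y p + ∠ p y u = ∠ v y u :=
    angle_split hsb1.symm (hcol v hv y hy u hu hvy huv.symm huy.symm)
  -- triangle angle sums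
  have T1 := EuclideanGeometry.angle_add_angle_add_angle_eq_pi (p₁ := p) (p₂ := u) x
    hpu.symm
  have T2 := EuclideanGeometry.angle_add_angle_add_angle_eq_pi (p₁ := p) (p₂ := x) v
    hpx.symm
  have T3 := EuclideanGeometry.angle_add_angle_add_angle_eq_pi (p₁ := p) (p₂ := v) y
    hpv.symm
  have T4 := EuclideanGeometry.angle_add_angle_add_angle_eq_pi (p₁ := p) (p₂ := y) u
    hpy.symm
  -- straight angles at p
  have hP1 : ∠ x p u + ∠ x p v = π :=
    EuclideanGeometry.angle_add_angle_eq_pi_of_angle_eq_pi x hsb1.angle₁₂₃_eq_pi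
  have hP2 : ∠ y p u + ∠ y p v = π :=
    EuclideanGeometry.angle_add_angle_eq_pi_of_angle_eq_pi y hsb1.angle₁₂₃_eq_pi
  have c1 : ∠ v p x = ∠ x p v := EuclideanGeometry.angle_comm v p x
  have c2 : ∠ u p y = ∠ y p u := EuclideanGeometry.angle_comm u p y
  have c3 : ∠ p u x = ∠ x u p := EuclideanGeometry.angle_comm p u x
  have c4 : ∠ y u p = ∠ p u y := EuclideanGeometry.angle_comm y u p
  -- the quadrilateral angle sum
  have hsum : ∠ x u y + ∠ u x v + ∠ x v y + ∠ v y u = 2 * π := by linarith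
  -- each angle is at most π/2 since the points are outside the open disks
  have bound : ∀ a b : EuclideanSpace ℝ (Fin 2), ∀ w ∈ P, w ≠ a → w ≠ b →
      (∀ w' ∈ P, w' ≠ a → w' ≠ b → ¬ dist w' (midpoint ℝ a b) < dist a b / 2) →
      ∠ a w b ≤ π / 2 := by
    intro a b w hwP hwa hwb hG
    have h1 : dist a b / 2 ≤ dist w (midpoint ℝ a b) := not_lt.mp (hG w hwP hwa hwb)
    have h2 : (dist a b / 2) ^ 2 ≤ dist w (midpoint ℝ a b) ^ 2 := by
      have := dist_nonneg (x := a) (y := b)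
      nlinarith [dist_nonneg (x := w) (y := midpoint ℝ a b)]
    have h3 : 0 ≤ (inner ℝ (a - w) (b - w) : ℝ) := by
      have := key_ident a b w
      linarith
    rw [angle_eq_vec]
    exact angle_le_of_inner_nonneg h3
  have b1 : ∠ x u y ≤ π / 2 := bound x y u hu hux huy hGxy
  have b2 : ∠ u x v ≤ π / 2 := bound u v x hx hux.symm hvx.symm hGuv
  have b3 : ∠ x v y ≤ π / 2 := bound x y v hv hvx hvy hGxy
  have b4 : ∠ v y u ≤ π / 2 := by
    have : ∠ v y u = ∠ u y v := EuclideanGeometry.angle_comm v y u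
    rw [this]
    exact bound u v y hy huy.symm hvy.symm hGuv
  -- so all four angles are exactly π/2
  have e1 : ∠ x u y = π / 2 := by linarith
  have e2 : ∠ u x v = π / 2 := by linarith
  have e3 : ∠ x v y = π / 2 := by linarith
  have e4 : ∠ v y u = π / 2 := by linarith
  -- hence all four points lie on the circle with diameter uv
  have hzero : ∀ a b w : EuclideanSpace ℝ (Fin 2), ∠ a w b = π / 2 →
      dist w (midpoint ℝ a b) = dist a b / 2 := by
    intro a b w hang
    rw [angle_eq_vec] at hang
    have h0 : (inner ℝ (a - w) (b - w) : ℝ) = 0 :=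
      (InnerProductGeometry.inner_eq_zero_iff_angle_eq_pi_div_two (a - w) (b - w)).mpr hang
    have hk := key_ident a b w
    rw [h0, add_zero] at hk
    have hd : 0 ≤ dist a b / 2 := by positivity
    exact (sq_eq_sq₀ dist_nonneg hd).mp hk
  have du : dist u (midpoint ℝ u v) = dist u v / 2 := by
    have hc : (inner ℝ (u - u) (v - u) : ℝ) = 0 := by simp
    have hk := key_ident u v u
    rw [hc, add_zero] at hk
    exact (sq_eq_sq₀ dist_nonneg (by positivity)).mp hk
  have dv : dist v (midpoint ℝ u v) = dist u v / 2 := by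
    have hc : (inner ℝ (u - v) (v - v) : ℝ) = 0 := by simp
    have hk := key_ident u v v
    rw [hc, add_zero] at hk
    exact (sq_eq_sq₀ dist_nonneg (by positivity)).mp hk
  have dx : dist x (midpoint ℝ u v) = dist u v / 2 := hzero u v x e2
  have dy : dist y (midpoint ℝ u v) = dist u v / 2 := by
    refine hzero u v y ?_
    rw [← EuclideanGeometry.angle_comm v y u]
    exact e4
  have hconc : Concyclic ({u, v, x, y} : Set (EuclideanSpace ℝ (Fin 2))) := by
    refine ⟨⟨midpoint ℝ u v, dist u v / 2, ?_⟩,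
      coplanar_of_finrank_eq_two (k := ℝ) _ finrank_euclideanSpace_fin⟩
    rintro z hz
    simp only [Set.mem_insert_iff, Set.mem_singleton_iff] at hz
    rcases hz with rfl | rfl | rfl | rfl
    · exact du
    · exact dv
    · exact dx
    · exact dy
  exact hcirc u hu v hv x hx y hy huv hux huy hvx hvy hxy hconc
end

section
/- If u, v are adjacent in a unit-disk graph but the Gabriel condition fails, i.e., some point w lies in the closed disk with diameter uv, then dist u w ≤ dist u v and dist v w ≤ dist u v, so both uw and vw are also unit-disk edges; hence removing uv preserves connectivity of the unit-disk graph. -/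
/-- The unit-disk graph on a finite point set `P ⊆ ℝ²`:
vertices are adjacent iff they are distinct and within Euclidean distance 1. -/
def unitDiskGraph (P : Finset (EuclideanSpace ℝ (Fin 2))) : SimpleGraph P where
  Adj a b := a ≠ b ∧ dist (a : EuclideanSpace ℝ (Fin 2)) b ≤ 1
  symm := by
    constructor
    intro a b hab
    exact ⟨hab.1.symm, by rw [dist_comm]; exact hab.2⟩
  loopless := by constructor; intro a h; exact h.1 rfl

/-- If `u, v` are adjacent in a unit-disk graph but the Gabriel condition fails,
i.e. some other point `w` of `P` lies in the closed disk with diameter `uv`,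
then `dist u w ≤ dist u v` and `dist v w ≤ dist u v`, so `uw` and `vw` are also
unit-disk edges; hence removing the edge `uv` preserves connectivity. -/
theorem stmt_13 (P : Finset (EuclideanSpace ℝ (Fin 2))) (u v w : P)
    (huv : u ≠ v) (hwu : w ≠ u) (hwv : w ≠ v)
    (hadj : dist (u : EuclideanSpace ℝ (Fin 2)) v ≤ 1)
    (hw : dist (w : EuclideanSpace ℝ (Fin 2))
        (midpoint ℝ (u : EuclideanSpace ℝ (Fin 2)) v)
      ≤ dist (u : EuclideanSpace ℝ (Fin 2)) v / 2) :
    dist (u : EuclideanSpace ℝ (Fin 2)) w ≤ dist (u : EuclideanSpace ℝ (Fin 2)) v ∧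
    dist (v : EuclideanSpace ℝ (Fin 2)) w ≤ dist (u : EuclideanSpace ℝ (Fin 2)) v ∧
    dist (u : EuclideanSpace ℝ (Fin 2)) w ≤ 1 ∧
    dist (v : EuclideanSpace ℝ (Fin 2)) w ≤ 1 ∧
    ((unitDiskGraph P).Connected →
      ((unitDiskGraph P).deleteEdges {s(u, v)}).Connected) := by
  have hum : dist (u : EuclideanSpace ℝ (Fin 2)) (midpoint ℝ (u : EuclideanSpace ℝ (Fin 2)) v)
      = dist (u : EuclideanSpace ℝ (Fin 2)) v / 2 := by
    rw [dist_left_midpoint]; norm_num; ring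
  have hvm : dist (v : EuclideanSpace ℝ (Fin 2)) (midpoint ℝ (u : EuclideanSpace ℝ (Fin 2)) v)
      = dist (u : EuclideanSpace ℝ (Fin 2)) v / 2 := by
    rw [dist_right_midpoint]; norm_num; ring
  have d1 : dist (u : EuclideanSpace ℝ (Fin 2)) w ≤ dist (u : EuclideanSpace ℝ (Fin 2)) v := by
    have := dist_triangle_right (u : EuclideanSpace ℝ (Fin 2)) w
      (midpoint ℝ (u : EuclideanSpace ℝ (Fin 2)) v)
    rw [hum] at this
    linarith
  have d2 : dist (v : EuclideanSpace ℝ (Fin 2)) w ≤ dist (u : EuclideanSpace ℝ (Fin 2)) v := by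
    have := dist_triangle_right (v : EuclideanSpace ℝ (Fin 2)) w
      (midpoint ℝ (u : EuclideanSpace ℝ (Fin 2)) v)
    rw [hvm] at this
    linarith
  refine ⟨d1, d2, d1.trans hadj, d2.trans hadj, ?_⟩
  intro hconn
  have huw : ((unitDiskGraph P).deleteEdges {s(u, v)}).Adj u w := by
    rw [SimpleGraph.deleteEdges_adj]
    refine ⟨⟨hwu.symm, d1.trans hadj⟩, ?_⟩
    simp only [Set.mem_singleton_iff, Sym2.eq_iff]
    rintro (⟨-, rfl⟩ | ⟨-, rfl⟩)
    · exact hwv rfl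
    · exact hwu rfl
  have hwv' : ((unitDiskGraph P).deleteEdges {s(u, v)}).Adj w v := by
    rw [SimpleGraph.deleteEdges_adj]
    refine ⟨⟨hwv, ?_⟩, ?_⟩
    · rw [dist_comm]; exact d2.trans hadj
    · simp only [Set.mem_singleton_iff, Sym2.eq_iff]
      rintro (⟨rfl, -⟩ | ⟨rfl, -⟩)
      · exact hwu rfl
      · exact hwv rfl
  have huvR : ((unitDiskGraph P).deleteEdges {s(u, v)}).Reachable u v :=
    huw.reachable.trans hwv'.reachable
  have key : ∀ a b : P, (unitDiskGraph P).Adj a b →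
      ((unitDiskGraph P).deleteEdges {s(u, v)}).Reachable a b := by
    intro a b hab
    by_cases h : s(a, b) = s(u, v)
    · rcases Sym2.eq_iff.mp h with ⟨rfl, rfl⟩ | ⟨rfl, rfl⟩
      · exact huvR
      · exact huvR.symm
    · exact SimpleGraph.Adj.reachable
        (SimpleGraph.deleteEdges_adj.mpr ⟨hab, by simpa using h⟩)
  have lift : ∀ a b : P, (unitDiskGraph P).Reachable a b →
      ((unitDiskGraph P).deleteEdges {s(u, v)}).Reachable a b := by
    intro a b h
    obtain ⟨p⟩ := h
    induction p with
    | nil => exact SimpleGraph.Reachable.refl _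
    | cons h p ih => exact (key _ _ h).trans ih
  haveI : Nonempty P := hconn.nonempty
  refine SimpleGraph.Connected.mk ?_
  intro a b
  exact lift a b (hconn.preconnected a b)
end
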